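/- arXiv:1110.1192 — 2 statements merged into one kernel-verified Lean document; each statement's English description precedes it below -/
import Mathlib

section
/- Let α : S¹ → ℝ be square-integrable with Fourier expansion α(θ) = ∑_{k≥0} [a_k cos kθ + b_k sin kθ]. Define for r > 1 the extension α(r,θ) = ∑_{k≥0} (K_k(√s r)/K_k(√s)) [a_k cos kθ + b_k sin kθ], where K_k is the modified Bessel function of the second kind and s > 0. Then the series converges absolutely for r > 3 and |α(r,θ)| ≤ C e^{−√s r / 4} ‖α‖_{L²(S¹)} for all r > 3, with C an absolute constant. -/
open Real MeasureTheory

/-- The modified Bessel function of the second kind of integer order `k`. -/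
noncomputable def besselK (k : ℕ) (t : ℝ) : ℝ :=
  ∫ τ in Set.Ioi (0 : ℝ), Real.exp (-t * Real.cosh τ) * Real.cosh (k * τ)

/-!
Both estimates on `K_k(t r) / K_k(t)` come from comparing integrands. Since `cosh τ ≥ 1`,
replacing `t` by `t r` costs at least a factor `exp (-t (r - 1))`; shifting the integration
variable by `log r` gives `cosh (k log r) K_k(t r) ≤ K_k(t)`, so the ratio is also at most
`2 r⁻ᵏ`. The square of the ratio is bounded by the product of the two bounds, whose sum over `k`
is `O(exp (-t (r - 1)))`, and Cauchy–Schwarz against the Fourier coefficients finishes the proof.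
-/

open Set

lemma cosh_le_exp_abs (x : ℝ) : cosh x ≤ exp |x| := by
  rw [← cosh_abs, cosh_eq]
  have : exp (-|x|) ≤ exp |x| := exp_le_exp.2 (by linarith [abs_nonneg x])
  linarith

lemma exp_div_two_le_cosh (x : ℝ) : exp x / 2 ≤ cosh x := by
  rw [cosh_eq]; linarith [exp_pos (-x)]

lemma sq_div_four_le_cosh {x : ℝ} (hx : 0 ≤ x) : x ^ 2 / 4 ≤ cosh x := by
  linarith [quadratic_le_exp_of_nonneg hx, exp_div_two_le_cosh x]

lemma cosh_mul_cosh_le_cosh_add {x y : ℝ} (hx : 0 ≤ x) (hy : 0 ≤ y) :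
    cosh x * cosh y ≤ cosh (x + y) := by
  rw [cosh_add]
  nlinarith [sinh_nonneg_iff.2 hx, sinh_nonneg_iff.2 hy]

lemma cosh_add_le_exp_mul_cosh (x : ℝ) {y : ℝ} (hy : 0 ≤ y) :
    cosh (x + y) ≤ exp y * cosh x := by
  rw [cosh_add, ← cosh_add_sinh y]
  nlinarith [sinh_nonneg_iff.2 hy, sinh_lt_cosh x]

lemma integrable_exp_neg_mul_sq_add_mul {b : ℝ} (hb : 0 < b) (c : ℝ) :
    Integrable fun x : ℝ => exp (-b * x ^ 2 + c * x) := by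
  refine (integrable_cexp_quadratic (b := b) (by simpa using hb) c 0).norm.congr
    (ae_of_all _ fun x => ?_)
  simp [Complex.norm_exp, ← Complex.ofReal_pow]

lemma integrableOn_besselK_integrand (k : ℕ) {t : ℝ} (ht : 0 < t) :
    IntegrableOn (fun τ => exp (-t * cosh τ) * cosh (k * τ)) (Ioi 0) := by
  refine (integrable_exp_neg_mul_sq_add_mul (b := t / 4) (by positivity) k).integrableOn.mono'
    (by fun_prop) ?_
  filter_upwards [ae_restrict_mem measurableSet_Ioi] with τ (hτ : 0 < τ)
  rw [norm_of_nonneg (by positivity), exp_add]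
  refine mul_le_mul (exp_le_exp.2 ?_) ?_ (cosh_pos _).le (exp_pos _).le
  · nlinarith [sq_div_four_le_cosh hτ.le]
  · simpa [abs_of_nonneg hτ.le] using cosh_le_exp_abs (k * τ)

lemma besselK_pos (k : ℕ) {t : ℝ} (ht : 0 < t) : 0 < besselK k t := by
  rw [besselK, setIntegral_pos_iff_support_of_nonneg_ae
    (ae_of_all _ fun τ => by positivity) (integrableOn_besselK_integrand k ht)]
  have : Function.support (fun τ => exp (-t * cosh τ) * cosh (k * τ)) = univ :=
    Function.support_eq_univ fun τ => by positivity
  rw [this, univ_inter, volume_Ioi]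
  exact WithTop.top_pos

lemma besselK_le_exp_mul_besselK (k : ℕ) {t t' : ℝ} (ht : 0 < t) (htt' : t ≤ t') :
    besselK k t' ≤ exp (-(t' - t)) * besselK k t := by
  rw [besselK, besselK, ← integral_const_mul]
  refine setIntegral_mono_on (integrableOn_besselK_integrand k (ht.trans_le htt'))
    ((integrableOn_besselK_integrand k ht).const_mul _) measurableSet_Ioi fun τ _ => ?_
  rw [← mul_assoc, ← exp_add]
  refine mul_le_mul_of_nonneg_right (exp_le_exp.2 ?_) (cosh_pos _).le
  nlinarith [one_le_cosh τ]

lemma integral_Ioi_comp_add_right {E : Type*} [NormedAddCommGroup E] [NormedSpace ℝ E]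
    (f : ℝ → E) (a c : ℝ) : ∫ x in Ioi a, f (x + c) = ∫ x in Ioi (a + c), f x := by
  rw [← image_add_const_Ioi, (measurePreserving_add_right volume c).setIntegral_image_emb
    (measurableEmbedding_addRight c)]

lemma integrableOn_Ioi_comp_add_right_iff {E : Type*} [NormedAddCommGroup E] {f : ℝ → E}
    {a c : ℝ} : IntegrableOn (fun x => f (x + c)) (Ioi a) ↔ IntegrableOn f (Ioi (a + c)) := by
  rw [← image_add_const_Ioi, (measurePreserving_add_right volume c).integrableOn_image
    (measurableEmbedding_addRight c)]
  rfl

/- After the substitution `τ ↦ τ + L`, use `cosh (τ + L) ≤ exp L * cosh τ` and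
`cosh (k τ) cosh (k L) ≤ cosh (k (τ + L))`. -/
lemma cosh_mul_besselK_mul_exp_le (k : ℕ) {t L : ℝ} (ht : 0 < t) (hL : 0 ≤ L) :
    cosh (k * L) * besselK k (t * exp L) ≤ besselK k t := by
  set f : ℝ → ℝ := fun τ => exp (-t * cosh τ) * cosh (k * τ)
  have hf : IntegrableOn f (Ioi 0) := integrableOn_besselK_integrand k ht
  have hpointwise : ∀ τ ∈ Ioi (0 : ℝ),
      cosh (k * L) * (exp (-(t * exp L) * cosh τ) * cosh (k * τ)) ≤ f (τ + L) := by
    intro τ (hτ : 0 < τ)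
    have hexp : exp (-(t * exp L) * cosh τ) ≤ exp (-t * cosh (τ + L)) :=
      exp_le_exp.2 (by nlinarith [cosh_add_le_exp_mul_cosh τ hL])
    have hcosh : cosh (k * τ) * cosh (k * L) ≤ cosh (k * (τ + L)) := by
      rw [mul_add]; exact cosh_mul_cosh_le_cosh_add (by positivity) (by positivity)
    calc cosh (k * L) * (exp (-(t * exp L) * cosh τ) * cosh (k * τ))
        = exp (-(t * exp L) * cosh τ) * (cosh (k * τ) * cosh (k * L)) := by ring
      _ ≤ f (τ + L) := mul_le_mul hexp hcosh (by positivity) (exp_pos _).le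
  calc cosh (k * L) * besselK k (t * exp L)
      = ∫ τ in Ioi 0, cosh (k * L) * (exp (-(t * exp L) * cosh τ) * cosh (k * τ)) := by
        rw [besselK, integral_const_mul]
    _ ≤ ∫ τ in Ioi 0, f (τ + L) :=
        setIntegral_mono_on ((integrableOn_besselK_integrand k (by positivity)).const_mul _)
          (integrableOn_Ioi_comp_add_right_iff.2 (by simpa using hf.mono_set (Ioi_subset_Ioi hL)))
          measurableSet_Ioi hpointwise
    _ = ∫ τ in Ioi L, f τ := by rw [integral_Ioi_comp_add_right, zero_add]
    _ ≤ besselK k t :=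
        setIntegral_mono_set hf (ae_of_all _ fun τ => by positivity)
          (Ioi_subset_Ioi hL).eventuallyLE

lemma besselK_div_besselK_le_exp (k : ℕ) {t r : ℝ} (ht : 0 < t) (hr : 1 ≤ r) :
    besselK k (t * r) / besselK k t ≤ exp (-(t * (r - 1))) := by
  rw [div_le_iff₀ (besselK_pos k ht), mul_sub, mul_one]
  exact besselK_le_exp_mul_besselK k ht (le_mul_of_one_le_right ht.le hr)

lemma besselK_div_besselK_le_two_div_pow (k : ℕ) {t r : ℝ} (ht : 0 < t) (hr : 1 ≤ r) :
    besselK k (t * r) / besselK k t ≤ 2 / r ^ k := by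
  have hr₀ : 0 < r := one_pos.trans_le hr
  have hcosh : r ^ k / 2 ≤ cosh (k * log r) := by
    simpa [← log_pow, exp_log (pow_pos hr₀ k)] using exp_div_two_le_cosh (k * log r)
  have key := cosh_mul_besselK_mul_exp_le k ht (log_nonneg hr)
  rw [exp_log hr₀] at key
  rw [div_le_div_iff₀ (besselK_pos k ht) (by positivity)]
  nlinarith [besselK_pos k (mul_pos ht hr₀)]

lemma summable_besselK_div_besselK_sq_and_tsum_le {t r : ℝ} (ht : 0 < t) (hr : 3 ≤ r) :
    Summable (fun k : ℕ => (besselK k (t * r) / besselK k t) ^ 2) ∧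
      ∑' k : ℕ, (besselK k (t * r) / besselK k t) ^ 2 ≤ (2 * exp (-t * r / 4)) ^ 2 := by
  have hq : (1 / 3 : ℝ) < 1 := by norm_num
  have hgeom := (summable_geometric_of_lt_one (by norm_num) hq).mul_left (2 * exp (-(t * (r - 1))))
  have hbound : ∀ k : ℕ, (besselK k (t * r) / besselK k t) ^ 2 ≤
      2 * exp (-(t * (r - 1))) * (1 / 3) ^ k := by
    intro k
    have hpow : 2 / r ^ k ≤ 2 * (1 / 3 : ℝ) ^ k := by
      rw [one_div_pow, ← div_eq_mul_one_div]
      gcongr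
    have hQ₀ : 0 ≤ besselK k (t * r) / besselK k t :=
      (div_pos (besselK_pos k (by positivity)) (besselK_pos k ht)).le
    calc (besselK k (t * r) / besselK k t) ^ 2
        ≤ exp (-(t * (r - 1))) * (2 / r ^ k) := by
          rw [sq]
          exact mul_le_mul (besselK_div_besselK_le_exp k ht (by linarith))
            (besselK_div_besselK_le_two_div_pow k ht (by linarith)) hQ₀ (exp_pos _).le
      _ ≤ exp (-(t * (r - 1))) * (2 * (1 / 3) ^ k) := by gcongr
      _ = 2 * exp (-(t * (r - 1))) * (1 / 3) ^ k := by ring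
  have hsum := hgeom.of_nonneg_of_le (fun _ => sq_nonneg _) hbound
  refine ⟨hsum, (hsum.tsum_le_tsum hbound hgeom).trans ?_⟩
  have hexp : exp (-(t * (r - 1))) ≤ exp (-t * r / 4 + -t * r / 4) := exp_le_exp.2 (by nlinarith)
  rw [tsum_mul_left, tsum_geometric_of_lt_one (by norm_num) hq, mul_pow, sq (exp _), ← exp_add,
    show (1 - 1 / 3 : ℝ)⁻¹ = 3 / 2 by norm_num]
  linarith [exp_pos (-(t * (r - 1)))]

lemma summable_abs_mul_and_abs_tsum_mul_le {ι : Type*} {w c : ι → ℝ}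
    (hw : Summable fun i => w i ^ 2) (hc : Summable fun i => c i ^ 2) :
    Summable (fun i => |w i * c i|) ∧
      |∑' i, w i * c i| ≤ √(∑' i, w i ^ 2) * √(∑' i, c i ^ 2) := by
  have h := Real.summable_and_inner_le_Lp_mul_Lq_tsum_of_nonneg .two_two
    (f := fun i => |w i|) (g := fun i => |c i|) (fun _ => abs_nonneg _) (fun _ => abs_nonneg _)
    (by simpa using hw) (by simpa using hc)
  simp only [rpow_two, sq_abs, ← abs_mul, ← sqrt_eq_rpow] at h
  have htri := norm_tsum_le_tsum_norm (f := fun i => w i * c i) h.1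
  simp only [Real.norm_eq_abs] at htri
  exact ⟨h.1, htri.trans h.2⟩

lemma sq_mul_cos_add_mul_sin_le (a b x : ℝ) : (a * cos x + b * sin x) ^ 2 ≤ a ^ 2 + b ^ 2 := by
  have h : (a * cos x + b * sin x) ^ 2 + (a * sin x - b * cos x) ^ 2 = a ^ 2 + b ^ 2 := by
    linear_combination (a ^ 2 + b ^ 2) * sin_sq_add_cos_sq x
  linarith [sq_nonneg (a * sin x - b * cos x)]

/-- Exterior exponential decay for solutions of `-Δu + s u = 0` outside the unit disk,
expressed through the Fourier coefficients `a`, `b` of the boundary data. -/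
theorem exterior_decay :
    ∃ C : ℝ, 0 < C ∧
      ∀ (s : ℝ), 0 < s → ∀ (a b : ℕ → ℝ),
        Summable (fun k => a k ^ 2 + b k ^ 2) →
        ∀ (r : ℝ), 3 < r → ∀ θ : ℝ,
          Summable (fun k : ℕ =>
            |besselK k (Real.sqrt s * r) / besselK k (Real.sqrt s) *
              (a k * Real.cos (k * θ) + b k * Real.sin (k * θ))|) ∧
          |∑' k : ℕ, besselK k (Real.sqrt s * r) / besselK k (Real.sqrt s) *
              (a k * Real.cos (k * θ) + b k * Real.sin (k * θ))| ≤
            C * Real.exp (-Real.sqrt s * r / 4) *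
              (∑' k : ℕ, (a k ^ 2 + b k ^ 2)) ^ ((1 : ℝ) / 2) := by
  refine ⟨2, two_pos, fun s hs a b hab r hr θ => ?_⟩
  have ht : 0 < √s := sqrt_pos.2 hs
  have hc : ∀ k : ℕ, (a k * cos (k * θ) + b k * sin (k * θ)) ^ 2 ≤ a k ^ 2 + b k ^ 2 :=
    fun k => sq_mul_cos_add_mul_sin_le _ _ _
  have hc_sum := hab.of_nonneg_of_le (fun _ => sq_nonneg _) hc
  obtain ⟨hQ_sum, hQ_le⟩ := summable_besselK_div_besselK_sq_and_tsum_le ht hr.le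
  obtain ⟨habs, hle⟩ := summable_abs_mul_and_abs_tsum_mul_le hQ_sum hc_sum
  refine ⟨habs, hle.trans ?_⟩
  rw [← sqrt_eq_rpow]
  exact mul_le_mul ((sqrt_le_sqrt hQ_le).trans_eq (sqrt_sq (by positivity)))
    (sqrt_le_sqrt (hc_sum.tsum_le_tsum hc hab)) (sqrt_nonneg _) (by positivity)
end

section
/- For all 0 < x < 1, K₁(x)/K₀(x) ≤ 2/(x ln(e/x)), where K₀ and K₁ are the modified Bessel functions of the second kind of orders zero and one. -/
/-!
Write `L = 1 - log x`; the claim is `K₁(x) · x L ≤ 2 K₀(x)`. Comparing with integrals of exact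
derivatives `d/dτ e^{-x g(τ)} = -x g'(τ) e^{-x g(τ)}` gives two upper bounds for `K₁`:
`K₁ ≤ 1/x` (since `cosh ≥ sinh`) and `K₁ ≤ K₀/2 + e^{-x} (1/x + 1/4)` (from
`cosh τ = sinh τ + e^{-τ}` and `e^{-τ} ≤ (1 + e^{-2τ})/2`). There are two lower bounds for `K₀`:
`K₀ ≥ log (2/x) - 1 + x²/4`, integrating `e^{-y} ≥ 1 - y` over `[0, log (2/x)]`, and
`K₀ ≥ e^{-x} √(π / (2x + 1/2))`, substituting `u = sinh (τ/2)` and bounding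
`1 / √(1 + u²) ≥ e^{-u²/2}`, which leaves a Gaussian integral. For `x ≤ 4/e³` the first bound
of each pair suffices. For `x ≥ 1/6` the second ones do, once `-log x ≤ 1/√x - √x` turns the
claim into a polynomial inequality in `√x`.
-/

open Real MeasureTheory

/-- The modified Bessel function of the second kind of order zero. -/
noncomputable def besselK0 (t : ℝ) : ℝ :=
  ∫ τ in Set.Ioi (0 : ℝ), Real.exp (-t * Real.cosh τ)

/-- The modified Bessel function of the second kind of order one. -/
noncomputable def besselK1 (t : ℝ) : ℝ :=
  ∫ τ in Set.Ioi (0 : ℝ), Real.exp (-t * Real.cosh τ) * Real.cosh τ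

open Set Filter Topology

section ExpNegMulComp

variable {g g' : ℝ → ℝ} {x a : ℝ}

lemma hasDerivAt_neg_exp_neg_mul_comp_div (hx : x ≠ 0) {τ c : ℝ} (hg : HasDerivAt g c τ) :
    HasDerivAt (fun τ => -(exp (-x * g τ) / x)) (exp (-x * g τ) * c) τ := by
  refine (((hg.const_mul (-x)).exp.div_const x).neg).congr_deriv ?_
  field_simp

lemma tendsto_neg_exp_neg_mul_comp_div (hx : 0 < x) (hg : Tendsto g atTop atTop) :
    Tendsto (fun τ => -(exp (-x * g τ) / x)) atTop (𝓝 0) := by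
  have : Tendsto (fun τ => exp (-x * g τ)) atTop (𝓝 0) :=
    tendsto_exp_comp_nhds_zero.2 (hg.const_mul_atTop_of_neg (neg_neg_of_pos hx))
  simpa using (this.div_const x).neg

lemma integrableOn_exp_neg_mul_comp_mul_deriv (hx : 0 < x)
    (hg : ∀ τ ∈ Ici a, HasDerivAt g (g' τ) τ) (hg' : ∀ τ ∈ Ioi a, 0 ≤ g' τ)
    (hgt : Tendsto g atTop atTop) :
    IntegrableOn (fun τ => exp (-x * g τ) * g' τ) (Ioi a) :=
  integrableOn_Ioi_deriv_of_nonneg'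
    (fun τ hτ => hasDerivAt_neg_exp_neg_mul_comp_div hx.ne' (hg τ hτ))
    (fun τ hτ => mul_nonneg (exp_pos _).le (hg' τ hτ)) (tendsto_neg_exp_neg_mul_comp_div hx hgt)

lemma integral_exp_neg_mul_comp_mul_deriv (hx : 0 < x)
    (hg : ∀ τ ∈ Ici a, HasDerivAt g (g' τ) τ) (hg' : ∀ τ ∈ Ioi a, 0 ≤ g' τ)
    (hgt : Tendsto g atTop atTop) :
    ∫ τ in Ioi a, exp (-x * g τ) * g' τ = exp (-x * g a) / x := by
  rw [integral_Ioi_of_hasDerivAt_of_nonneg'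
    (fun τ hτ => hasDerivAt_neg_exp_neg_mul_comp_div hx.ne' (hg τ hτ))
    (fun τ hτ => mul_nonneg (exp_pos _).le (hg' τ hτ)) (tendsto_neg_exp_neg_mul_comp_div hx hgt)]
  ring

end ExpNegMulComp

lemma tendsto_sinh_atTop : Tendsto sinh atTop atTop :=
  tendsto_atTop_mono' atTop ((eventually_ge_atTop 0).mono fun _ h => self_le_sinh_iff.2 h)
    tendsto_id

lemma tendsto_cosh_atTop : Tendsto cosh atTop atTop :=
  tendsto_atTop_mono (fun τ => (sinh_lt_cosh τ).le) tendsto_sinh_atTop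

lemma cosh_mul_exp_neg_sinh_sq_div_two_le_one (y : ℝ) : cosh y * exp (-(sinh y ^ 2 / 2)) ≤ 1 := by
  have hcosh : cosh y ≤ exp (sinh y ^ 2 / 2) := by
    refine (pow_le_pow_iff_left₀ (cosh_pos y).le (exp_pos _).le two_ne_zero).1 ?_
    rw [cosh_sq', ← exp_nat_mul]
    ring_nf
    linarith [add_one_le_exp (sinh y ^ 2)]
  rw [exp_neg, ← div_eq_mul_inv]
  exact (div_le_one (exp_pos _)).2 hcosh

lemma sub_inv_le_two_mul_log {t : ℝ} (ht0 : 0 < t) (ht1 : t ≤ 1) : t - t⁻¹ ≤ 2 * log t := by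
  have h := sinh_le_self_iff.2 (log_nonpos ht0.le ht1)
  rw [sinh_log ht0] at h
  linarith

section BesselIntegrals

variable {x : ℝ}

lemma integrableOn_exp_neg_mul_sinh_mul_cosh (hx : 0 < x) :
    IntegrableOn (fun τ => exp (-x * sinh τ) * cosh τ) (Ioi 0) :=
  integrableOn_exp_neg_mul_comp_mul_deriv hx (fun τ _ => hasDerivAt_sinh τ)
    (fun τ _ => (cosh_pos τ).le) tendsto_sinh_atTop

lemma integral_exp_neg_mul_sinh_mul_cosh (hx : 0 < x) :
    ∫ τ in Ioi 0, exp (-x * sinh τ) * cosh τ = 1 / x := by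
  rw [integral_exp_neg_mul_comp_mul_deriv hx (fun τ _ => hasDerivAt_sinh τ)
    (fun τ _ => (cosh_pos τ).le) tendsto_sinh_atTop]
  simp

lemma integrableOn_exp_neg_mul_cosh_mul_sinh (hx : 0 < x) :
    IntegrableOn (fun τ => exp (-x * cosh τ) * sinh τ) (Ioi 0) :=
  integrableOn_exp_neg_mul_comp_mul_deriv hx (fun τ _ => hasDerivAt_cosh τ)
    (fun _ hτ => sinh_nonneg_iff.2 (le_of_lt hτ)) tendsto_cosh_atTop

lemma integral_exp_neg_mul_cosh_mul_sinh (hx : 0 < x) :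
    ∫ τ in Ioi 0, exp (-x * cosh τ) * sinh τ = exp (-x) / x := by
  rw [integral_exp_neg_mul_comp_mul_deriv hx (fun τ _ => hasDerivAt_cosh τ)
    (fun _ hτ => sinh_nonneg_iff.2 (le_of_lt hτ)) tendsto_cosh_atTop]
  simp

lemma exp_neg_mul_cosh_le_exp_neg_mul_sinh (hx : 0 ≤ x) (τ : ℝ) :
    exp (-x * cosh τ) ≤ exp (-x * sinh τ) :=
  exp_le_exp.2 (by nlinarith [sinh_lt_cosh τ])

lemma integrableOn_Ioi_of_le_exp_neg_mul_sinh_mul_cosh (hx : 0 < x) {f : ℝ → ℝ}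
    (hf : Continuous f) (hf0 : ∀ τ, 0 ≤ f τ) (hfle : ∀ τ, f τ ≤ exp (-x * sinh τ) * cosh τ) :
    IntegrableOn f (Ioi 0) :=
  (integrableOn_exp_neg_mul_sinh_mul_cosh hx).mono' hf.aestronglyMeasurable
    (ae_of_all _ fun τ => (norm_of_nonneg (hf0 τ)).trans_le (hfle τ))

lemma integrableOn_exp_neg_mul_cosh (hx : 0 < x) :
    IntegrableOn (fun τ => exp (-x * cosh τ)) (Ioi 0) :=
  integrableOn_Ioi_of_le_exp_neg_mul_sinh_mul_cosh hx (by fun_prop) (fun _ => (exp_pos _).le)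
    fun τ => (exp_neg_mul_cosh_le_exp_neg_mul_sinh hx.le τ).trans
      (le_mul_of_one_le_right (exp_pos _).le (one_le_cosh τ))

lemma integrableOn_exp_neg_mul_cosh_mul_cosh (hx : 0 < x) :
    IntegrableOn (fun τ => exp (-x * cosh τ) * cosh τ) (Ioi 0) :=
  integrableOn_Ioi_of_le_exp_neg_mul_sinh_mul_cosh hx (by fun_prop)
    (fun τ => mul_nonneg (exp_pos _).le (cosh_pos τ).le)
    fun τ => mul_le_mul_of_nonneg_right (exp_neg_mul_cosh_le_exp_neg_mul_sinh hx.le τ)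
      (cosh_pos τ).le

end BesselIntegrals

section BesselBounds

variable {x : ℝ}

lemma besselK1_le_inv (hx : 0 < x) : besselK1 x ≤ 1 / x := by
  rw [besselK1, ← integral_exp_neg_mul_sinh_mul_cosh hx]
  exact setIntegral_mono_on (integrableOn_exp_neg_mul_cosh_mul_cosh hx)
    (integrableOn_exp_neg_mul_sinh_mul_cosh hx) measurableSet_Ioi fun τ _ =>
      mul_le_mul_of_nonneg_right (exp_neg_mul_cosh_le_exp_neg_mul_sinh hx.le τ) (cosh_pos τ).le

lemma besselK1_le_half_besselK0_add (hx : 0 < x) :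
    besselK1 x ≤ besselK0 x / 2 + exp (-x) * (1 / x + 1 / 4) := by
  have hpt : ∀ τ, exp (-x * cosh τ) * cosh τ ≤
      exp (-x * cosh τ) * sinh τ + exp (-x * cosh τ) / 2 + exp (-x) / 2 * exp (-2 * τ) := by
    intro τ
    have hcosh : cosh τ = sinh τ + exp (-τ) := by rw [← cosh_sub_sinh]; ring
    have hsq : exp (-2 * τ) = exp (-τ) ^ 2 := by rw [← exp_nat_mul]; ring_nf
    have hamgm : exp (-τ) ≤ 1 / 2 + exp (-2 * τ) / 2 := by
      nlinarith [sq_nonneg (exp (-τ) - 1)]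
    have hdecay : exp (-x * cosh τ) ≤ exp (-x) :=
      exp_le_exp.2 (by nlinarith [one_le_cosh τ])
    set E := exp (-x * cosh τ)
    rw [hcosh]
    nlinarith [mul_le_mul_of_nonneg_left hamgm (exp_pos (-x * cosh τ)).le,
      mul_le_mul_of_nonneg_right hdecay (exp_pos (-2 * τ)).le]
  have hsinh := integrableOn_exp_neg_mul_cosh_mul_sinh hx
  have hhalf := (integrableOn_exp_neg_mul_cosh hx).div_const 2
  have hsum : IntegrableOn (fun τ => exp (-x * cosh τ) * sinh τ + exp (-x * cosh τ) / 2)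
      (Ioi 0) := hsinh.add hhalf
  have htail := (integrableOn_exp_mul_Ioi (a := -2) (by norm_num) 0).const_mul (exp (-x) / 2)
  calc besselK1 x
      ≤ ∫ τ in Ioi 0, (exp (-x * cosh τ) * sinh τ + exp (-x * cosh τ) / 2
          + exp (-x) / 2 * exp (-2 * τ)) :=
        setIntegral_mono_on (integrableOn_exp_neg_mul_cosh_mul_cosh hx)
          (hsum.add htail) measurableSet_Ioi fun τ _ => hpt τ
    _ = exp (-x) / x + besselK0 x / 2 + exp (-x) / 2 * (1 / 2) := by
        rw [integral_add hsum htail, integral_add hsinh hhalf,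
          integral_exp_neg_mul_cosh_mul_sinh hx, integral_div, integral_const_mul,
          integral_exp_mul_Ioi (by norm_num)]
        norm_num [besselK0]
    _ = besselK0 x / 2 + exp (-x) * (1 / x + 1 / 4) := by ring

lemma log_two_div_sub_one_add_le_besselK0 (hx : 0 < x) (hx2 : x ≤ 2) :
    log (2 / x) - 1 + x ^ 2 / 4 ≤ besselK0 x := by
  set T := log (2 / x)
  have hT : 0 ≤ T := log_nonneg (by rw [le_div_iff₀ hx]; linarith)
  have hsinh : sinh T = 1 / x - x / 4 := by
    rw [sinh_log (by positivity)]
    field_simp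
    ring
  have hprim : ∀ τ ∈ uIcc 0 T, HasDerivAt (fun τ => τ - x * sinh τ) (1 - x * cosh τ) τ :=
    fun τ _ => (hasDerivAt_id τ).sub ((hasDerivAt_sinh τ).const_mul x)
  calc T - 1 + x ^ 2 / 4 = ∫ τ in 0..T, (1 - x * cosh τ) := by
        rw [intervalIntegral.integral_eq_sub_of_hasDerivAt hprim
          (Continuous.intervalIntegrable (by fun_prop) _ _), hsinh]
        field_simp
        simp
        ring
    _ ≤ ∫ τ in 0..T, exp (-x * cosh τ) :=
        intervalIntegral.integral_mono_on hT (Continuous.intervalIntegrable (by fun_prop) _ _)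
          (Continuous.intervalIntegrable (by fun_prop) _ _) fun τ _ => by
          linarith [add_one_le_exp (-x * cosh τ)]
    _ = ∫ τ in Ioc 0 T, exp (-x * cosh τ) := intervalIntegral.integral_of_le hT
    _ ≤ besselK0 x :=
        setIntegral_mono_set (integrableOn_exp_neg_mul_cosh hx)
          (ae_of_all _ fun _ => (exp_pos _).le) Ioc_subset_Ioi_self.eventuallyLE

lemma exp_neg_mul_sqrt_le_besselK0 (hx : 0 < x) :
    exp (-x) * √(π / (2 * x + 1 / 2)) ≤ besselK0 x := by
  set f : ℝ → ℝ := fun τ => sinh (τ / 2)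
  set f' : ℝ → ℝ := fun τ => cosh (τ / 2) / 2
  set G : ℝ → ℝ := fun u => 2 * exp (-x) * exp (-(2 * x + 1 / 2) * u ^ 2)
  have hGf : ∀ τ, (G ∘ f) τ * f' τ =
      exp (-x * cosh τ) * (cosh (τ / 2) * exp (-(sinh (τ / 2) ^ 2 / 2))) := by
    intro τ
    have hcosh := cosh_two_mul (τ / 2)
    rw [show 2 * (τ / 2) = τ by ring, cosh_sq'] at hcosh
    have hexp : exp (-x) * exp (-(2 * x + 1 / 2) * sinh (τ / 2) ^ 2) =
        exp (-x * cosh τ) * exp (-(sinh (τ / 2) ^ 2 / 2)) := by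
      rw [← exp_add, ← exp_add, hcosh]
      ring_nf
    simp only [G, f, f', Function.comp]
    linear_combination cosh (τ / 2) * hexp
  have hGf_le : ∀ τ, (G ∘ f) τ * f' τ ≤ exp (-x * cosh τ) := fun τ => by
    rw [hGf]
    exact mul_le_of_le_one_right (exp_pos _).le (cosh_mul_exp_neg_sinh_sq_div_two_le_one _)
  have hGf_int : IntegrableOn (fun τ => (G ∘ f) τ * f' τ) (Ioi 0) :=
    integrableOn_Ioi_of_le_exp_neg_mul_sinh_mul_cosh hx (by fun_prop)
      (fun τ => by rw [hGf]; positivity) fun τ => (hGf_le τ).trans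
        ((exp_neg_mul_cosh_le_exp_neg_mul_sinh hx.le τ).trans
          (le_mul_of_one_le_right (exp_pos _).le (one_le_cosh τ)))
  have hf : ∀ τ, HasDerivAt f (f' τ) τ := fun τ =>
    ((hasDerivAt_id τ).div_const 2).sinh.congr_deriv (by simp only [f', id]; ring)
  have hG_int : Integrable G :=
    (integrable_exp_neg_mul_sq (by positivity : 0 < 2 * x + 1 / 2)).const_mul _
  calc exp (-x) * √(π / (2 * x + 1 / 2)) = ∫ u in Ioi 0, G u := by
        rw [integral_const_mul, integral_gaussian_Ioi]
        ring
    _ = ∫ τ in Ioi 0, (G ∘ f) τ * f' τ := by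
        rw [integral_comp_mul_deriv_Ioi (f := f) (by fun_prop)
          (tendsto_sinh_atTop.comp (tendsto_id.atTop_div_const two_pos))
          (fun τ _ => (hf τ).hasDerivWithinAt)
          (by fun_prop : Continuous G).continuousOn hG_int.integrableOn
          ((integrableOn_Ici_iff_integrableOn_Ioi).2 hGf_int)]
        simp [f]
    _ ≤ besselK0 x :=
        setIntegral_mono_on hGf_int (integrableOn_exp_neg_mul_cosh hx) measurableSet_Ioi
          fun τ _ => hGf_le τ

lemma besselK0_pos (hx : 0 < x) : 0 < besselK0 x :=
  lt_of_lt_of_le (by positivity) (exp_neg_mul_sqrt_le_besselK0 hx)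

end BesselBounds

section RatioBound

variable {x : ℝ}

lemma besselK1_mul_le_two_mul_besselK0_of_le (hx0 : 0 < x) (hx : x ≤ 4 / exp 3) :
    besselK1 x * (x * (1 - log x)) ≤ 2 * besselK0 x := by
  have hlog : log x ≤ 2 * log 2 - 3 := by
    have h := log_le_log hx0 hx
    rwa [log_div (by norm_num) (exp_ne_zero 3), log_exp,
      show (4 : ℝ) = 2 ^ 2 by norm_num, log_pow, Nat.cast_ofNat] at h
  have hlog2 : log 2 ≤ 1 := by linarith [log_le_sub_one_of_pos (two_pos : (0 : ℝ) < 2)]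
  have hx2 : x ≤ 2 := by
    refine hx.trans ((div_le_iff₀ (exp_pos 3)).2 ?_)
    linarith [add_one_le_exp 3]
  calc besselK1 x * (x * (1 - log x)) ≤ 1 / x * (x * (1 - log x)) :=
        mul_le_mul_of_nonneg_right (besselK1_le_inv hx0)
          (mul_nonneg hx0.le (by linarith))
    _ = 1 - log x := by field_simp
    _ ≤ 2 * (log (2 / x) - 1 + x ^ 2 / 4) := by
        rw [log_div two_ne_zero hx0.ne']
        nlinarith [sq_nonneg x]
    _ ≤ 2 * besselK0 x := by linarith [log_two_div_sub_one_add_le_besselK0 hx0 hx2]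

lemma besselK1_mul_le_two_mul_besselK0_of_ge (hx6 : 1 / 6 ≤ x) (hx1 : x ≤ 1) :
    besselK1 x * (x * (1 - log x)) ≤ 2 * besselK0 x := by
  have hx0 : 0 < x := by linarith
  set t := √x
  have ht0 : 0 < t := sqrt_pos.2 hx0
  have ht1 : t ≤ 1 := sqrt_le_one.2 hx1
  have ht25 : 2 / 5 ≤ t := le_sqrt_of_sq_le (by linarith)
  have hxt : x = t ^ 2 := (sq_sqrt hx0.le).symm
  have hL : 1 - log x ≤ 1 + t⁻¹ - t := by
    rw [hxt, log_pow]
    linarith [sub_inv_le_two_mul_log ht0 ht1]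
  -- `π > 3` and AM-GM: the gap is a multiple of `(8x - 1)²`
  have hsqrt : 12 / (8 * x + 5) ≤ √(π / (2 * x + 1 / 2)) := by
    refine le_sqrt_of_sq_le ?_
    rw [div_pow, div_le_div_iff₀ (by positivity) (by positivity)]
    nlinarith [pi_gt_three, sq_nonneg (8 * x - 1)]
  have hK0 : exp (-x) * (12 / (8 * x + 5)) ≤ besselK0 x :=
    (mul_le_mul_of_nonneg_left hsqrt (exp_pos _).le).trans (exp_neg_mul_sqrt_le_besselK0 hx0)
  have hpoly : (1 + t⁻¹ - t) * (x / 2 + (1 + x / 4) * (8 * x + 5) / 12) ≤ 2 := by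
    rw [show 1 + t⁻¹ - t = (t + 1 - t ^ 2) / t by field_simp, div_mul_eq_mul_div,
      div_le_iff₀ ht0, hxt]
    have ha := sub_nonneg.2 ht25
    have hb := sub_nonneg.2 ht1
    nlinarith [mul_nonneg ha hb, pow_nonneg ha 3, pow_nonneg hb 3]
  have hK0pos := besselK0_pos hx0
  have hL0 : 0 ≤ 1 - log x := by linarith [log_nonpos hx0.le hx1]
  calc besselK1 x * (x * (1 - log x))
      ≤ (besselK0 x / 2 + exp (-x) * (1 / x + 1 / 4)) * (x * (1 - log x)) :=
        mul_le_mul_of_nonneg_right (besselK1_le_half_besselK0_add hx0)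
          (mul_nonneg hx0.le hL0)
    _ = besselK0 x * (x * (1 - log x) / 2)
          + exp (-x) * (12 / (8 * x + 5)) * ((8 * x + 5) / 12 * (1 + x / 4) * (1 - log x)) := by
        field_simp
    _ ≤ besselK0 x * (x * (1 - log x) / 2)
          + besselK0 x * ((8 * x + 5) / 12 * (1 + x / 4) * (1 - log x)) := by
        gcongr
    _ = besselK0 x * ((1 - log x) * (x / 2 + (1 + x / 4) * (8 * x + 5) / 12)) := by ring
    _ ≤ besselK0 x * ((1 + t⁻¹ - t) * (x / 2 + (1 + x / 4) * (8 * x + 5) / 12)) := by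
        gcongr
    _ ≤ besselK0 x * 2 := by gcongr
    _ = 2 * besselK0 x := mul_comm _ _

end RatioBound

theorem besselK1_div_besselK0_bound (x : ℝ) (hx0 : 0 < x) (hx1 : x < 1) :
    besselK1 x / besselK0 x ≤ 2 / (x * Real.log (Real.exp 1 / x)) := by
  have hlog : log (exp 1 / x) = 1 - log x := by rw [log_div (exp_ne_zero 1) hx0.ne', log_exp]
  have hxL : 0 < x * (1 - log x) := mul_pos hx0 (by linarith [log_neg hx0 hx1])
  rw [hlog, div_le_div_iff₀ (besselK0_pos hx0) hxL]
  have hthreshold : 1 / 6 ≤ 4 / exp 3 := by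
    rw [div_le_div_iff₀ (by norm_num) (exp_pos 3), show (3 : ℝ) = (3 : ℕ) * 1 by norm_num,
      exp_nat_mul]
    nlinarith [pow_le_pow_left₀ (exp_pos 1).le exp_one_lt_d9.le 3]
  rcases le_total x (4 / exp 3) with hsmall | hlarge
  · exact besselK1_mul_le_two_mul_besselK0_of_le hx0 hsmall
  · exact besselK1_mul_le_two_mul_besselK0_of_ge (hthreshold.trans hlarge) hx1.le
end
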